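/- If X and Y are independent generalized Poisson difference random variables with parameters (θ₁, θ₂, λ) and (θ₃, θ₄, λ), then X − Y is a generalized Poisson difference random variable with parameters (θ₁ + θ₄, θ₂ + θ₃, λ). -/

import Mathlib

/-!
In distribution `X = A₁ - A₂` and `Y = A₃ - A₄` with independent `Aᵢ ∼ GP(θᵢ, λ)`, so
`X - Y = (A₁ + A₄) - (A₂ + A₃)` and everything reduces to `GP(a, λ) ∗ GP(b, λ) = GP(a + b, λ)`.
Up to the factor `e^{-θ-kλ}/k!` this is the binomial-type identity
`∑ₖ C(n,k) Aₖ(x) Aₙ₋ₖ(y) = Aₙ(x + y)` of the Abel polynomials `Aₖ(x) = x (x + kλ)^(k-1)`, which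
follows from Abel's identity `∑ₖ C(n,k) Aₖ(x) (y - kλ)^(n-k) = (x + y)^n`. That one is proved by
induction on `n`: both sides have derivative `(n+1)(x+y)^n` in `y`, and at `y = -x` the left side
is `x` times an `(n+1)`-st finite difference of a polynomial of degree `n`, hence `0`.
For `λ < 1` the `GP` masses are summable since `(θ + kλ)^k / k! ≤ c^k e^{(θ+kλ)/c}`, and
`c e^{λ/c - λ} < 1` for `λ ≤ c < 1`.
-/

open MeasureTheory ProbabilityTheory

/-- The generalized Poisson difference pmf `GPD(θ₁, θ₂, λ)`:
`P(Z = z) = e^{-θ₁-θ₂-zλ} ∑_{s ≥ max(0,-z)} [θ₂(θ₂+sλ)^{s-1}/s!]·[θ₁(θ₁+(s+z)λ)^{s+z-1}/(s+z)!]·e^{-2sλ}`. -/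
noncomputable def gpdPmf (θ1 θ2 lam : ℝ) (z : ℤ) : ℝ :=
  Real.exp (-θ1 - θ2 - z * lam) *
    ∑' s : ℕ, if 0 ≤ (s : ℤ) + z then
      (θ2 * (θ2 + s * lam) ^ ((s : ℝ) - 1) / (Nat.factorial s)) *
      (θ1 * (θ1 + ((s : ℝ) + (z : ℝ)) * lam) ^ (((s : ℝ) + (z : ℝ)) - 1) /
        (Nat.factorial ((s : ℤ) + z).toNat)) *
      Real.exp (-2 * s * lam)
    else 0

/-- `Z` follows a generalized Poisson difference distribution `GPD(θ₁, θ₂, λ)` under `P`,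
i.e. `Z` is distributed as the difference of two independent `GP(θ₁, λ)` and `GP(θ₂, λ)`
random variables. -/
def HasGPD {Ω : Type*} [MeasurableSpace Ω] (P : Measure Ω) (Z : Ω → ℤ) (θ1 θ2 lam : ℝ) : Prop :=
  ∀ z : ℤ, P {ω | Z ω = z} = ENNReal.ofReal (gpdPmf θ1 θ2 lam z)

open Finset Polynomial Function
open scoped Nat ENNReal

theorem sum_neg_one_pow_mul_choose_mul_pow_eq_zero {R : Type*} [CommRing R] (x a : R)
    {m n : ℕ} (h : m < n) :
    ∑ k ∈ range (n + 1), (-1) ^ (n - k) * n.choose k * (x + k * a) ^ m = 0 := by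
  have hdeg : ((C a * X + C x) ^ m).natDegree < n :=
    (natDegree_pow_le_of_le m natDegree_linear_le).trans_lt (by simpa using h)
  have := congrFun (fwdDiff_iter_eq_zero_of_degree_lt hdeg) 0
  rw [fwdDiff_iter_eq_sum_shift] at this
  simp only [zero_add, nsmul_one, eval_pow, eval_add, eval_mul, eval_C, eval_X, zsmul_eq_mul,
    Pi.zero_apply] at this
  rw [← this]
  refine sum_congr rfl fun k _ => ?_
  push_cast
  ring

theorem sum_choose_succ_mul_sub_mul {R : Type*} [CommSemiring R] (m : ℕ) (f : ℕ → R) :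
    ∑ k ∈ range (m + 2), ((m + 1).choose k : R) * ((m + 1 - k : ℕ) : R) * f k
      = (m + 1) * ∑ k ∈ range (m + 1), (m.choose k : R) * f k := by
  rw [sum_range_succ, Nat.sub_self, Nat.cast_zero, mul_zero, zero_mul, add_zero, mul_sum]
  refine sum_congr rfl fun k _ => ?_
  have := congrArg (Nat.cast : ℕ → R) (Nat.choose_mul_succ_eq m k)
  push_cast at this
  rw [← this]
  ring

/-- The Abel polynomial `x (x + kλ)^(k-1)` with a natural exponent. Its value `1` at `k = 0` is
what the real-power form `x (x + kλ)^((k : ℝ) - 1)` in `gpdPmf` gives only for `x ≠ 0`. -/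
noncomputable def abelPoly (lam x : ℝ) (k : ℕ) : ℝ :=
  if k = 0 then 1 else x * (x + k * lam) ^ (k - 1)

theorem abelPoly_mul_pow {lam x : ℝ} {k n : ℕ} (hk : k ≤ n + 1) :
    abelPoly lam x k * (x + k * lam) ^ (n + 1 - k) = x * (x + k * lam) ^ n := by
  rcases Nat.eq_zero_or_pos k with rfl | hk0
  · simp [abelPoly, pow_succ']
  · rw [abelPoly, if_neg hk0.ne', mul_assoc, ← pow_add]
    congr 2
    omega

theorem abelPoly_eq_pow_sub (lam x : ℝ) (m : ℕ) :
    abelPoly lam x m = (x + m * lam) ^ m - m * lam * (x + m * lam) ^ (m - 1) := by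
  cases m with
  | zero => simp [abelPoly]
  | succ m =>
    simp only [abelPoly, Nat.add_one_ne_zero, if_false, Nat.add_sub_cancel, pow_succ']
    ring

/-- Abel's identity. -/
theorem sum_choose_mul_abelPoly_mul_pow (lam x : ℝ) (n : ℕ) (y : ℝ) :
    ∑ k ∈ range (n + 1), n.choose k * abelPoly lam x k * (y - k * lam) ^ (n - k) = (x + y) ^ n := by
  induction n generalizing y with
  | zero => simp [abelPoly]
  | succ n ih =>
    set F : ℝ → ℝ := fun y =>
      ∑ k ∈ range (n + 2), (n + 1).choose k * abelPoly lam x k * (y - k * lam) ^ (n + 1 - k)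
    have hF : ∀ y, HasDerivAt F ((n + 1) * (x + y) ^ n) y := by
      intro y
      refine (HasDerivAt.fun_sum (u := range (n + 2)) fun k _ =>
        (((hasDerivAt_id y).sub_const (k * lam)).fun_pow (n + 1 - k)).const_mul
          ((n + 1).choose k * abelPoly lam x k)).congr_deriv ?_
      have := sum_choose_succ_mul_sub_mul n fun k => abelPoly lam x k * (y - k * lam) ^ (n - k)
      simp only [← mul_assoc] at this
      rw [← ih, ← this]
      refine sum_congr rfl fun k _ => ?_
      rw [Nat.sub_right_comm, Nat.add_sub_cancel, id]
      ring
    have hG : ∀ y, HasDerivAt (fun y => (x + y) ^ (n + 1)) ((n + 1) * (x + y) ^ n) y := by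
      intro y
      simpa using ((hasDerivAt_id y).const_add x).fun_pow (n + 1)
    have hF_neg : F (-x) = 0 := calc
      F (-x) = x * ∑ k ∈ range (n + 2), (-1) ^ (n + 1 - k) * ((n + 1).choose k : ℝ) *
          (x + k * lam) ^ n := by
        rw [mul_sum]
        refine sum_congr rfl fun k hk => ?_
        rw [show -x - k * lam = -1 * (x + k * lam) by ring, mul_pow]
        linear_combination ((n + 1).choose k * (-1) ^ (n + 1 - k) : ℝ) *
          abelPoly_mul_pow (lam := lam) (x := x) (mem_range_succ_iff.mp hk)
      _ = 0 := by rw [sum_neg_one_pow_mul_choose_mul_pow_eq_zero x lam n.lt_succ_self, mul_zero]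
    have hconst : F y - (x + y) ^ (n + 1) = F (-x) - (x + -x) ^ (n + 1) :=
      is_const_of_deriv_eq_zero (f := fun y => F y - (x + y) ^ (n + 1))
        (fun y => ((hF y).fun_sub (hG y)).differentiableAt)
        (fun y => by simpa using ((hF y).fun_sub (hG y)).deriv) y (-x)
    rw [hF_neg, add_neg_cancel, zero_pow n.succ_ne_zero, sub_zero] at hconst
    exact sub_eq_zero.mp hconst

theorem sum_choose_mul_abelPoly_mul_abelPoly (lam x y : ℝ) (n : ℕ) :
    ∑ k ∈ range (n + 1), n.choose k * abelPoly lam x k * abelPoly lam y (n - k)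
      = abelPoly lam (x + y) n := by
  cases n with
  | zero => simp [abelPoly]
  | succ m =>
    set w := y + (m + 1) * lam
    have hy : ∀ k ∈ range (m + 2), abelPoly lam y (m + 1 - k)
        = (w - k * lam) ^ (m + 1 - k) - ((m + 1 - k : ℕ) : ℝ) * lam * (w - k * lam) ^ (m - k) := by
      intro k hk
      have hk : k ≤ m + 1 := mem_range_succ_iff.mp hk
      rw [abelPoly_eq_pow_sub, Nat.sub_right_comm, Nat.add_sub_cancel,
        show y + ((m + 1 - k : ℕ) : ℝ) * lam = w - k * lam by push_cast [hk]; ring]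
    calc _ = ∑ k ∈ range (m + 2), (m + 1).choose k * abelPoly lam x k * (w - k * lam) ^ (m + 1 - k)
          - lam * ∑ k ∈ range (m + 2), ((m + 1).choose k : ℝ) * ((m + 1 - k : ℕ) : ℝ) *
            (abelPoly lam x k * (w - k * lam) ^ (m - k)) := by
          rw [mul_sum, ← sum_sub_distrib]
          refine sum_congr rfl fun k hk => ?_
          rw [hy k hk]
          ring
      _ = (x + w) ^ (m + 1) - lam * ((m + 1) * (x + w) ^ m) := by
          rw [sum_choose_mul_abelPoly_mul_pow, sum_choose_succ_mul_sub_mul,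
            ← sum_choose_mul_abelPoly_mul_pow lam x m w]
          simp only [mul_assoc]
      _ = abelPoly lam (x + y) (m + 1) := by
          rw [abelPoly_eq_pow_sub, show x + w = x + y + ((m + 1 : ℕ) : ℝ) * lam by push_cast; ring]
          push_cast
          ring

noncomputable def gpPmf (θ lam : ℝ) (k : ℕ) : ℝ := abelPoly lam θ k * Real.exp (-θ - k * lam) / k !

theorem abelPoly_nonneg {lam x : ℝ} (hx : 0 ≤ x) (hlam : 0 ≤ lam) (k : ℕ) :
    0 ≤ abelPoly lam x k := by
  unfold abelPoly
  split_ifs <;> positivity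

theorem abelPoly_le_pow {lam x : ℝ} (hx : 0 ≤ x) (hlam : 0 ≤ lam) (k : ℕ) :
    abelPoly lam x k ≤ (x + k * lam) ^ k := by
  cases k with
  | zero => simp [abelPoly]
  | succ k =>
    rw [abelPoly, if_neg k.succ_ne_zero, Nat.add_sub_cancel, pow_succ']
    gcongr
    exact le_add_of_nonneg_right (by positivity)

theorem mul_rpow_sub_one_eq_abelPoly {lam x : ℝ} (hx : x ≠ 0) (k : ℕ) :
    x * (x + k * lam) ^ ((k : ℝ) - 1) = abelPoly lam x k := by
  cases k with
  | zero => simp [abelPoly, Real.rpow_neg_one, hx]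
  | succ k => simp [abelPoly, ← Real.rpow_natCast]

theorem gpPmf_nonneg {θ lam : ℝ} (hθ : 0 ≤ θ) (hlam : 0 ≤ lam) (k : ℕ) : 0 ≤ gpPmf θ lam k := by
  have := abelPoly_nonneg hθ hlam k
  unfold gpPmf
  positivity

theorem sum_gpPmf_mul_gpPmf (a b lam : ℝ) (n : ℕ) :
    ∑ k ∈ range (n + 1), gpPmf a lam k * gpPmf b lam (n - k) = gpPmf (a + b) lam n := by
  have key : ∀ k ∈ range (n + 1), gpPmf a lam k * gpPmf b lam (n - k)
      = n.choose k * abelPoly lam a k * abelPoly lam b (n - k) *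
        (Real.exp (-(a + b) - n * lam) / n !) := by
    intro k hk
    have hk : k ≤ n := mem_range_succ_iff.mp hk
    have hexp : Real.exp (-a - k * lam) * Real.exp (-b - (n - k : ℕ) * lam)
        = Real.exp (-(a + b) - n * lam) := by
      rw [← Real.exp_add, Nat.cast_sub hk]
      ring_nf
    rw [gpPmf, gpPmf, Nat.cast_choose ℝ hk, ← hexp]
    field_simp
  rw [sum_congr rfl key, ← sum_mul, sum_choose_mul_abelPoly_mul_abelPoly, gpPmf]
  ring

theorem mul_exp_div_sub_lt_one {lam c : ℝ} (hc : 0 < c) (hlc : lam ≤ c) (hc1 : c < 1) :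
    c * Real.exp (lam / c - lam) < 1 := by
  have hle : lam / c - lam ≤ 1 - c := by
    have h := (div_le_one hc).mpr hlc
    have e : lam / c - lam = lam / c * (1 - c) := by field_simp
    nlinarith
  have hlt : c < Real.exp (c - 1) := by
    simpa using Real.add_one_lt_exp (sub_ne_zero.mpr hc1.ne)
  calc c * Real.exp (lam / c - lam) ≤ c * Real.exp (1 - c) := by gcongr
    _ < Real.exp (c - 1) * Real.exp (1 - c) := by gcongr
    _ = 1 := by rw [← Real.exp_add]; simp

theorem gpPmf_le {θ lam c : ℝ} (hθ : 0 ≤ θ) (hlam : 0 ≤ lam) (hc : 0 < c) (k : ℕ) :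
    gpPmf θ lam k ≤ Real.exp (θ / c - θ) * (c * Real.exp (lam / c - lam)) ^ k := by
  have hx : 0 ≤ θ + k * lam := by positivity
  calc gpPmf θ lam k ≤ (θ + k * lam) ^ k / k ! * Real.exp (-θ - k * lam) := by
        rw [gpPmf, mul_div_right_comm]
        gcongr
        exact abelPoly_le_pow hθ hlam k
    _ = c ^ k * (((θ + k * lam) / c) ^ k / k !) * Real.exp (-θ - k * lam) := by
        rw [div_pow]
        field_simp
    _ ≤ c ^ k * Real.exp ((θ + k * lam) / c) * Real.exp (-θ - k * lam) := by
        gcongr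
        exact Real.pow_div_factorial_le_exp _ (by positivity) k
    _ = Real.exp (θ / c - θ) * (c * Real.exp (lam / c - lam)) ^ k := by
        rw [mul_pow, ← Real.exp_nat_mul, mul_assoc, ← Real.exp_add, mul_left_comm, ← Real.exp_add]
        ring_nf

theorem summable_gpPmf {θ lam : ℝ} (hθ : 0 ≤ θ) (h0 : 0 ≤ lam) (h1 : lam < 1) :
    Summable (gpPmf θ lam) := by
  have hc : 0 < (1 + lam) / 2 := by linarith
  refine Summable.of_nonneg_of_le (gpPmf_nonneg hθ h0) (gpPmf_le hθ h0 hc) ?_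
  exact (summable_geometric_of_lt_one (by positivity)
    (mul_exp_div_sub_lt_one hc (by linarith) (by linarith))).mul_left _

noncomputable def gpMass (θ lam : ℝ) : ℤ → ℝ≥0∞ :=
  extend ((↑) : ℕ → ℤ) (fun k => ENNReal.ofReal (gpPmf θ lam k)) 0

theorem gpMass_natCast (θ lam : ℝ) (k : ℕ) : gpMass θ lam k = ENNReal.ofReal (gpPmf θ lam k) :=
  Nat.cast_injective.extend_apply _ _ k

theorem gpMass_of_neg (θ lam : ℝ) {n : ℤ} (hn : n < 0) : gpMass θ lam n = 0 :=
  extend_apply' _ _ _ (by rintro ⟨k, rfl⟩; omega)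

theorem support_gpMass_subset (θ lam : ℝ) : support (gpMass θ lam) ⊆ Set.range ((↑) : ℕ → ℤ) :=
  support_subset_iff'.2 fun _ hn => extend_apply' _ _ _ hn

/-- Mass function of `A + B` for independent `A ∼ f`, `B ∼ g`. -/
noncomputable def addConv (f g : ℤ → ℝ≥0∞) (n : ℤ) : ℝ≥0∞ := ∑' k, f k * g (n - k)

/-- Mass function of `A - B` for independent `A ∼ f`, `B ∼ g`. -/
noncomputable def subConv (f g : ℤ → ℝ≥0∞) (z : ℤ) : ℝ≥0∞ := ∑' y, f (z + y) * g y

/-- `(A₁ - A₂) - (A₃ - A₄) = (A₁ + A₄) - (A₂ + A₃)`. -/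
theorem subConv_subConv (f₁ f₂ f₃ f₄ : ℤ → ℝ≥0∞) :
    subConv (subConv f₁ f₂) (subConv f₃ f₄) = subConv (addConv f₁ f₄) (addConv f₂ f₃) := by
  funext z
  let e : ℤ × ℤ × ℤ ≃ ℤ × ℤ × ℤ :=
    { toFun := fun p => (p.1 + p.2.1 + p.2.2, z + p.1 + p.2.1, p.2.1)
      invFun := fun q => (q.2.1 - z - q.2.2, q.2.2, z + q.1 - q.2.1)
      left_inv := fun p => by ext <;> simp only <;> omega
      right_inv := fun q => by ext <;> simp only <;> omega }
  calc ∑' y, (∑' s, f₁ (z + y + s) * f₂ s) * ∑' t, f₃ (y + t) * f₄ t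
      = ∑' p : ℤ × ℤ × ℤ, f₁ (z + p.1 + p.2.1) * f₂ p.2.1 * (f₃ (p.1 + p.2.2) * f₄ p.2.2) := by
        simp only [ENNReal.tsum_prod', ENNReal.tsum_mul_left, ENNReal.tsum_mul_right]
    _ = ∑' p, f₁ (e p).2.1 * f₄ (z + (e p).1 - (e p).2.1) *
          (f₂ (e p).2.2 * f₃ ((e p).1 - (e p).2.2)) := by
        refine tsum_congr fun p => ?_
        simp only [e, Equiv.coe_fn_mk]
        rw [show z + (p.1 + p.2.1 + p.2.2) - (z + p.1 + p.2.1) = p.2.2 by ring,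
          show p.1 + p.2.1 + p.2.2 - p.2.1 = p.1 + p.2.2 by ring]
        ring
    _ = ∑' q : ℤ × ℤ × ℤ, f₁ q.2.1 * f₄ (z + q.1 - q.2.1) * (f₂ q.2.2 * f₃ (q.1 - q.2.2)) :=
        e.tsum_eq fun q => f₁ q.2.1 * f₄ (z + q.1 - q.2.1) * (f₂ q.2.2 * f₃ (q.1 - q.2.2))
    _ = ∑' u, (∑' a, f₁ a * f₄ (z + u - a)) * ∑' b, f₂ b * f₃ (u - b) := by
        simp only [ENNReal.tsum_prod', ENNReal.tsum_mul_left, ENNReal.tsum_mul_right]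

theorem addConv_gpMass {a b lam : ℝ} (ha : 0 ≤ a) (hb : 0 ≤ b) (hlam : 0 ≤ lam) :
    addConv (gpMass a lam) (gpMass b lam) = gpMass (a + b) lam := by
  funext n
  rw [addConv, ← Nat.cast_injective.tsum_eq
    ((support_mul_subset_left _ _).trans (support_gpMass_subset a lam))]
  rcases lt_or_ge n 0 with hn | hn
  · rw [gpMass_of_neg _ _ hn]
    exact ENNReal.tsum_eq_zero.mpr fun k => by rw [gpMass_of_neg b lam (by omega), mul_zero]
  obtain ⟨m, rfl⟩ := Int.eq_ofNat_of_zero_le hn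
  rw [tsum_eq_sum (s := range (m + 1)) fun k hk => by
      rw [gpMass_of_neg b lam (by simp at hk; omega), mul_zero],
    gpMass_natCast, ← sum_gpPmf_mul_gpPmf, ENNReal.ofReal_sum_of_nonneg fun k _ =>
      mul_nonneg (gpPmf_nonneg ha hlam k) (gpPmf_nonneg hb hlam _)]
  refine sum_congr rfl fun k hk => ?_
  rw [← Nat.cast_sub (mem_range_succ_iff.mp hk), gpMass_natCast, gpMass_natCast,
    ENNReal.ofReal_mul (gpPmf_nonneg ha hlam k)]

theorem gpdPmf_eq_tsum {θ1 θ2 lam : ℝ} (hθ1 : θ1 ≠ 0) (hθ2 : θ2 ≠ 0) (z : ℤ) :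
    gpdPmf θ1 θ2 lam z = ∑' s : ℕ,
      if 0 ≤ (s : ℤ) + z then gpPmf θ2 lam s * gpPmf θ1 lam ((s : ℤ) + z).toNat else 0 := by
  rw [gpdPmf, ← tsum_mul_left]
  refine tsum_congr fun s => ?_
  split_ifs with h
  · obtain ⟨N, hN⟩ := Int.eq_ofNat_of_zero_le h
    have hNr : (s : ℝ) + z = N := by exact_mod_cast hN
    rw [hN, Int.toNat_natCast, hNr, mul_rpow_sub_one_eq_abelPoly hθ1,
      mul_rpow_sub_one_eq_abelPoly hθ2, gpPmf, gpPmf]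
    have hexp : Real.exp (-θ1 - θ2 - z * lam) * Real.exp (-2 * s * lam)
        = Real.exp (-θ2 - s * lam) * Real.exp (-θ1 - N * lam) := by
      rw [← Real.exp_add, ← Real.exp_add, ← hNr]
      ring_nf
    linear_combination (abelPoly lam θ2 s / s ! * (abelPoly lam θ1 N / N !)) * hexp
  · rw [mul_zero]

theorem ofReal_gpdPmf {θ1 θ2 lam : ℝ} (hθ1 : 0 < θ1) (hθ2 : 0 < θ2) (h0 : 0 ≤ lam)
    (h1 : lam < 1) (z : ℤ) :
    ENNReal.ofReal (gpdPmf θ1 θ2 lam z) = subConv (gpMass θ1 lam) (gpMass θ2 lam) z := by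
  set f : ℕ → ℝ := fun s =>
    if 0 ≤ (s : ℤ) + z then gpPmf θ2 lam s * gpPmf θ1 lam ((s : ℤ) + z).toNat else 0 with hf
  have hf_nonneg : ∀ s, 0 ≤ f s := fun s => by
    simp only [hf]
    split_ifs
    exacts [mul_nonneg (gpPmf_nonneg hθ2.le h0 _) (gpPmf_nonneg hθ1.le h0 _), le_rfl]
  have hf_le : ∀ s, f s ≤ gpPmf θ2 lam s * ∑' k, gpPmf θ1 lam k := fun s => by
    have htsum : 0 ≤ ∑' k, gpPmf θ1 lam k := tsum_nonneg (gpPmf_nonneg hθ1.le h0)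
    simp only [hf]
    split_ifs
    · exact mul_le_mul_of_nonneg_left ((summable_gpPmf hθ1.le h0 h1).le_tsum _
        fun k _ => gpPmf_nonneg hθ1.le h0 k) (gpPmf_nonneg hθ2.le h0 s)
    · exact mul_nonneg (gpPmf_nonneg hθ2.le h0 s) htsum
  have hf_summable : Summable f := .of_nonneg_of_le hf_nonneg hf_le
    ((summable_gpPmf hθ2.le h0 h1).mul_right _)
  rw [gpdPmf_eq_tsum hθ1.ne' hθ2.ne', ← hf,
    ENNReal.ofReal_tsum_of_nonneg hf_nonneg hf_summable, subConv, ← Nat.cast_injective.tsum_eq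
    ((support_mul_subset_right _ _).trans (support_gpMass_subset θ2 lam))]
  refine tsum_congr fun s => ?_
  simp only [hf]
  split_ifs with h
  · obtain ⟨N, hN⟩ := Int.eq_ofNat_of_zero_le h
    rw [hN, add_comm z, hN, Int.toNat_natCast, gpMass_natCast, gpMass_natCast,
      ENNReal.ofReal_mul (gpPmf_nonneg hθ2.le h0 s), mul_comm]
  · rw [ENNReal.ofReal_zero, gpMass_of_neg _ _ (by omega), zero_mul]

theorem hasGPD_iff {Ω : Type*} [MeasurableSpace Ω] {P : Measure Ω} {Z : Ω → ℤ} {θ1 θ2 lam : ℝ}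
    (hθ1 : 0 < θ1) (hθ2 : 0 < θ2) (h0 : 0 ≤ lam) (h1 : lam < 1) :
    HasGPD P Z θ1 θ2 lam ↔
      (fun n => P {ω | Z ω = n}) = subConv (gpMass θ1 lam) (gpMass θ2 lam) := by
  simp only [HasGPD, funext_iff, ofReal_gpdPmf hθ1 hθ2 h0 h1]

theorem measure_sub_eq_subConv {Ω : Type*} [MeasurableSpace Ω] {P : Measure Ω} {X Y : Ω → ℤ}
    (hX : Measurable X) (hY : Measurable Y) (hXY : IndepFun X Y P) (z : ℤ) :
    P {ω | X ω - Y ω = z} = subConv (fun n => P {ω | X ω = n}) (fun n => P {ω | Y ω = n}) z := by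
  have hunion : {ω | X ω - Y ω = z} = ⋃ y, X ⁻¹' {z + y} ∩ Y ⁻¹' {y} := by
    ext ω
    simp only [Set.mem_ofPred_eq, Set.mem_iUnion, Set.mem_inter_iff, Set.mem_preimage,
      Set.mem_singleton_iff, exists_eq_right']
    omega
  rw [hunion, measure_iUnion]
  · exact tsum_congr fun y => hXY.measure_inter_preimage_eq_mul _ _
      (measurableSet_singleton _) (measurableSet_singleton _)
  · exact fun y y' hne => Set.disjoint_left.mpr fun ω h h' => hne (h.2.symm.trans h'.2)
  · exact fun y => (hX (measurableSet_singleton _)).inter (hY (measurableSet_singleton _))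

theorem gpd_convolution_sub_general {Ω : Type*} [MeasurableSpace Ω] (P : Measure Ω)
    (X Y : Ω → ℤ) (θ1 θ2 θ3 θ4 lam : ℝ)
    (hθ1 : 0 < θ1) (hθ2 : 0 < θ2) (hθ3 : 0 < θ3) (hθ4 : 0 < θ4)
    (hlam0 : 0 ≤ lam) (hlam1 : lam < 1)
    (hXm : Measurable X) (hYm : Measurable Y)
    (hX : HasGPD P X θ1 θ2 lam) (hY : HasGPD P Y θ3 θ4 lam)
    (hindep : IndepFun X Y P) :
    HasGPD P (fun ω => X ω - Y ω) (θ1 + θ4) (θ2 + θ3) lam := by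
  rw [hasGPD_iff hθ1 hθ2 hlam0 hlam1] at hX
  rw [hasGPD_iff hθ3 hθ4 hlam0 hlam1] at hY
  rw [hasGPD_iff (by positivity) (by positivity) hlam0 hlam1, funext_iff]
  intro z
  rw [measure_sub_eq_subConv hXm hYm hindep, hX, hY, subConv_subConv,
    addConv_gpMass hθ1.le hθ4.le hlam0, addConv_gpMass hθ2.le hθ3.le hlam0]

/-- The difference of two independent generalized Poisson difference random variables
with parameters `(θ₁, θ₂, λ)` and `(θ₃, θ₄, λ)` is a generalized Poisson difference
random variable with parameters `(θ₁+θ₄, θ₂+θ₃, λ)`. -/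
theorem gpd_convolution_sub {Ω : Type*} [MeasurableSpace Ω] (P : Measure Ω)
    [IsProbabilityMeasure P] (X Y : Ω → ℤ) (θ1 θ2 θ3 θ4 lam : ℝ)
    (hθ1 : 0 < θ1) (hθ2 : 0 < θ2) (hθ3 : 0 < θ3) (hθ4 : 0 < θ4)
    (hlam0 : 0 ≤ lam) (hlam1 : lam < 1)
    (hXm : Measurable X) (hYm : Measurable Y)
    (hX : HasGPD P X θ1 θ2 lam) (hY : HasGPD P Y θ3 θ4 lam)
    (hindep : IndepFun X Y P) :
    HasGPD P (fun ω => X ω - Y ω) (θ1 + θ4) (θ2 + θ3) lam :=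
  gpd_convolution_sub_general P X Y θ1 θ2 θ3 θ4 lam hθ1 hθ2 hθ3 hθ4 hlam0 hlam1 hXm hYm hX hY hindep
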